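/- Let G = (V,E) be a finite simple connected graph that is S4 for monophonic convexity. Then the VC dimension of the family ℋm(G) of monophonic halfspaces of G is at least ω(G). -/

import Mathlib

open SimpleGraph

variable {V : Type*}

/-- A walk is an induced (chordless) path. -/
def IsInducedPath (G : SimpleGraph V) {x y : V} (p : G.Walk x y) : Prop :=
  p.IsPath ∧ ∀ a b : V, a ∈ p.support → b ∈ p.support → G.Adj a b → s(a, b) ∈ p.edges

/-- The monophonic interval between `u` and `v`: all vertices on some induced
path between `u` and `v` (empty if `u = v`). -/
def mInterval (G : SimpleGraph V) (u v : V) : Set V :=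
  {z | u ≠ v ∧ ∃ p : G.Walk u v, IsInducedPath G p ∧ z ∈ p.support}

/-- Monophonic convexity. -/
def MConvex (G : SimpleGraph V) (C : Set V) : Prop :=
  ∀ x ∈ C, ∀ y ∈ C, mInterval G x y ⊆ C

/-- Monophonic halfspace. -/
def IsMHalfspace (G : SimpleGraph V) (H : Set V) : Prop :=
  MConvex G H ∧ MConvex G Hᶜ

/-- The monophonic shadow `u/v`. -/
def mShadow (G : SimpleGraph V) (u v : V) : Set V :=
  {z | u ∈ mInterval G z v}

/-- The border `Γ(X)`: vertices of `X` with a neighbour outside `X`. -/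
def border (G : SimpleGraph V) (X : Set V) : Set V :=
  {x | x ∈ X ∧ ∃ y, y ∉ X ∧ G.Adj x y}

/-- `△⁻uv = N(u) ∩ N(v)`. -/
def triMinus (G : SimpleGraph V) (u v : V) : Set V :=
  G.neighborSet u ∩ G.neighborSet v

/-- `△uv = (N(u) ∩ N(v)) ∪ {u, v}`. -/
def triangleSet (G : SimpleGraph V) (u v : V) : Set V :=
  (G.neighborSet u ∩ G.neighborSet v) ∪ {u, v}

/-- `□uv`: vertices appearing in some 4-cycle of `G` having `{u,v}` as an edge. -/
def squareSet (G : SimpleGraph V) (u v : V) : Set V :=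
  {x | ∃ a b : V, G.Adj v a ∧ G.Adj a b ∧ G.Adj b u ∧
    a ≠ u ∧ a ≠ v ∧ b ≠ u ∧ b ≠ v ∧ a ≠ b ∧ (x = u ∨ x = v ∨ x = a ∨ x = b)}

/-- `A = □uv \ △⁻uv`. -/
def setA (G : SimpleGraph V) (u v : V) : Set V :=
  squareSet G u v \ triMinus G u v

/-- `Aᵘ = {x ∈ A : d(x,u) < d(x,v)}`. -/
noncomputable def setAu (G : SimpleGraph V) (u v : V) : Set V :=
  {x ∈ setA G u v | G.dist x u < G.dist x v}

/-- `Aᵛ = A \ Aᵘ`. -/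
noncomputable def setAv (G : SimpleGraph V) (u v : V) : Set V :=
  setA G u v \ setAu G u v

/-- The graph obtained from `G` by deleting all edges of the induced subgraph `G[S]`. -/
def delInduced (G : SimpleGraph V) (S : Set V) : SimpleGraph V where
  Adj a b := G.Adj a b ∧ ¬(a ∈ S ∧ b ∈ S)
  symm := by
    refine ⟨?_⟩
    intro a b h
    exact ⟨h.1.symm, fun hc => h.2 ⟨hc.2, hc.1⟩⟩
  loopless := ⟨fun a h => G.loopless.irrefl a h.1⟩

/-- The graph `T = G \ E(G[□uv ∪ △⁻uv])`. -/
def graphT (G : SimpleGraph V) (u v : V) : SimpleGraph V :=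
  delInduced G (squareSet G u v ∪ triMinus G u v)

/-- The monophonic convex hull of `X`. -/
def mHull (G : SimpleGraph V) (X : Set V) : Set V :=
  ⋂₀ {C | MConvex G C ∧ X ⊆ C}

/-- `S` is an `(a,b)`-separator: every walk from `a` to `b` meets `S`. -/
def IsSeparator (G : SimpleGraph V) (S : Set V) (a b : V) : Prop :=
  ∀ p : G.Walk a b, ∃ s ∈ S, s ∈ p.support

/-- The cutset `δ(X)` as a set of edges. -/
def cutset (G : SimpleGraph V) (X : Set V) : Set (Sym2 V) :=
  {e | e ∈ G.edgeSet ∧ ∃ a b : V, e = s(a, b) ∧ a ∈ X ∧ b ∉ X}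

/-- A family of sets `ℋ` shatters a set `S`. -/
def Shatters (ℋ : Set (Set V)) (S : Set V) : Prop :=
  ∀ T ⊆ S, ∃ H ∈ ℋ, H ∩ S = T

/-- `G` is `S₄` for monophonic convexity: disjoint m-convex sets are
halfspace separable. -/
def IsS4 (G : SimpleGraph V) : Prop :=
  ∀ C₁ C₂ : Set V, MConvex G C₁ → MConvex G C₂ → Disjoint C₁ C₂ →
    ∃ H : Set V, IsMHalfspace G H ∧ C₁ ⊆ H ∧ C₂ ⊆ Hᶜ

/-! A clique is m-convex, since the only induced path between adjacent vertices is the edge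
itself; so in an S₄ graph every split of a clique is cut out by a halfspace. -/

namespace SimpleGraph.Walk

variable {G : SimpleGraph V}

theorem IsPath.support_eq_pair_of_mem_edges {u v : V} {p : G.Walk u v} (hp : p.IsPath)
    (huv : s(u, v) ∈ p.edges) : p.support = [u, v] := by
  cases p with
  | nil => simp at huv
  | @cons _ w _ hadj q =>
    have hq : q.IsPath ∧ u ∉ q.support := (cons_isPath_iff hadj q).mp hp
    rw [edges_cons, List.mem_cons] at huv
    rcases huv with hvw | hmem
    · obtain rfl : v = w := Sym2.congr_right.mp hvw
      obtain rfl : q = Walk.nil := (isPath_iff_nil.mp hq.1).eq_nil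
      rfl
    · exact absurd (fst_mem_support_of_mem_edges q hmem) hq.2

end SimpleGraph.Walk

theorem mInterval_subset_of_adj {G : SimpleGraph V} {u v : V} (h : G.Adj u v) :
    mInterval G u v ⊆ {u, v} := by
  rintro z ⟨-, p, ⟨hp, hind⟩, hz⟩
  rwa [hp.support_eq_pair_of_mem_edges (hind u v p.start_mem_support p.end_mem_support h),
    List.mem_pair] at hz

theorem SimpleGraph.IsClique.mConvex {G : SimpleGraph V} {K : Set V} (hK : G.IsClique K) :
    MConvex G K := by
  intro x hx y hy z hz
  rcases mInterval_subset_of_adj (hK hx hy hz.1) hz with rfl | rfl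
  exacts [hx, hy]

theorem IsS4.shatters_of_isClique {G : SimpleGraph V} (hS4 : IsS4 G) {K : Set V}
    (hK : G.IsClique K) : Shatters {H : Set V | IsMHalfspace G H} K := by
  intro T hT
  obtain ⟨H, hH, hTH, hKTH⟩ := hS4 T (K \ T) (hK.subset hT).mConvex
    (hK.subset Set.sdiff_subset).mConvex Set.disjoint_sdiff_right
  refine ⟨H, hH, Set.Subset.antisymm ?_ fun z hz => ⟨hTH hz, hT hz⟩⟩
  rintro z ⟨hzH, hzK⟩
  by_contra hzT
  exact hKTH ⟨hzK, hzT⟩ hzH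

theorem vc_dim_mhalfspaces_ge_general [Fintype V] (G : SimpleGraph V)
    (hS4 : IsS4 G) :
    ∃ S : Finset V, Shatters {H : Set V | IsMHalfspace G H} (S : Set V) ∧
      G.cliqueNum ≤ S.card := by
  obtain ⟨K, hK⟩ := G.exists_isNClique_cliqueNum
  exact ⟨K, hS4.shatters_of_isClique hK.isClique, hK.card_eq.ge⟩

/-- if `G` is `S₄` for monophonic convexity, the VC dimension of
its monophonic halfspaces is at least `ω(G)`: some shattered set has
cardinality at least `ω(G)`. -/
theorem vc_dim_mhalfspaces_ge [Fintype V] (G : SimpleGraph V) (hG : G.Connected)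
    (hS4 : IsS4 G) :
    ∃ S : Finset V, Shatters {H : Set V | IsMHalfspace G H} (S : Set V) ∧
      G.cliqueNum ≤ S.card :=
  vc_dim_mhalfspaces_ge_general G hS4
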